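/- arXiv:1003.4885 — 3 statements merged into one kernel-verified Lean document; each statement's English description precedes it below -/
import Mathlib

section
/- Let ε_1,…,ε_n be i.i.d. centered Gaussian random variables with variance σ² > 0, let x_{i,j} (1 ≤ i ≤ n, 1 ≤ j ≤ p) be real numbers with n^{-1}·Σ_{i=1}^n x_{i,j}² ≤ 1 for every j, and set V_j = n^{-1}·Σ_{i=1}^n x_{i,j}·ε_i. Let η ∈ (0,1), let 0 < τ ≤ 1, and let λ_n = (2√2/τ)·σ·√(log(p/η)/n). Then P(max_{j=1,…,p} 2|V_j| ≤ τ·λ_n) ≥ 1 − η. -/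
/-!
Each `V_j` is a centered Gaussian, of variance `σ² ∑ᵢ x_{ij}² / n² ≤ σ² / n` (independent Gaussians
add, as their characteristic functions multiply). Since `x² ≥ a² + (x - a)²` for `x ≥ a ≥ 0`,
shifting the density gives `P(N(0, v) ≥ a) ≤ exp (-a² / 2v) / 2`, hence the two-sided tail
`P(|N(0, v)| > a) ≤ exp (-a² / 2v)` without a factor `2`. At the threshold `τ λ_n / 2`, which is
exactly `σ √(2 log (p/η) / n)`, each column fails with probability at most `η / p`, and a union
bound over the `p` columns concludes.
-/

open MeasureTheory ProbabilityTheory Matrix Finset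
open scoped Classical BigOperators ENNReal NNReal

noncomputable section

/-- `‖a‖ₙ² = n⁻¹ ∑ᵢ aᵢ²`. -/
def normnSq {n : ℕ} (a : Fin n → ℝ) : ℝ := (∑ i, a i ^ 2) / n

/-- `ℓ₁` norm on `ℝ^p`. -/
def l1norm {p : ℕ} (b : Fin p → ℝ) : ℝ := ∑ j, |b j|

/-- `ℓ₂` norm on `ℝ^p`. -/
def l2norm {p : ℕ} (b : Fin p → ℝ) : ℝ := Real.sqrt (∑ j, b j ^ 2)

/-- `ℓ∞` norm on `ℝ^p`. -/
def linfnorm {p : ℕ} (b : Fin p → ℝ) : ℝ := ⨆ j, |b j|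

/-- The penalized least squares criterion
`‖Y − Xβ‖ₙ² + λ|β|₁ + μ·β'J'Jβ`. -/
def crit {n m p : ℕ} (X : Matrix (Fin n) (Fin p) ℝ) (Y : Fin n → ℝ)
    (J : Matrix (Fin m) (Fin p) ℝ) (lam mu : ℝ) (β : Fin p → ℝ) : ℝ :=
  normnSq (Y - X.mulVec β) + lam * l1norm β + mu * (β ⬝ᵥ (Jᵀ * J).mulVec β)

/-- Sparsity set `A* = {j : βⱼ ≠ 0}`. -/
def spSupp {p : ℕ} (βs : Fin p → ℝ) : Finset (Fin p) :=
  Finset.univ.filter fun j => βs j ≠ 0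

/-- Restriction `b_Θ` of a vector to a set of indices. -/
def restr {p : ℕ} (Θ : Finset (Fin p)) (b : Fin p → ℝ) : Fin p → ℝ :=
  fun j => if j ∈ Θ then b j else 0

/-- Assumption B(Θ) (and B'): the cone constraint is over `Θcone` and the quadratic
lower bound concerns the coordinates in `Θmeas`. -/
def AssumptionB {p : ℕ} (K : Matrix (Fin p) (Fin p) ℝ) (Θcone Θmeas : Finset (Fin p))
    (ρ φ : ℝ) : Prop :=
  ∀ Δ : Fin p → ℝ,
    (∑ j ∈ Θconeᶜ, |Δ j|) ≤ ρ * Real.sqrt (∑ j ∈ Θcone, Δ j ^ 2) →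
    φ * ∑ j ∈ Θmeas, Δ j ^ 2 ≤ Δ ⬝ᵥ K.mulVec Δ

/-- Restricted eigenvalue assumption for the matrix `K` over the set `A`. -/
def AssumptionRE {p : ℕ} (K : Matrix (Fin p) (Fin p) ℝ) (A : Finset (Fin p)) (φ : ℝ) : Prop :=
  ∀ Δ : Fin p → ℝ,
    (∑ j ∈ Aᶜ, |Δ j|) ≤ 4 * ∑ j ∈ A, |Δ j| →
    φ * ∑ j ∈ A, Δ j ^ 2 ≤ Δ ⬝ᵥ K.mulVec Δ

/-- `C` is a set of `mt` indices outside `B` carrying the `mt` largest components of `δ`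
(in absolute value) outside `B`. -/
def isTopSet {p : ℕ} (δ : Fin p → ℝ) (B : Finset (Fin p)) (mt : ℕ)
    (C : Finset (Fin p)) : Prop :=
  C ⊆ Bᶜ ∧ C.card = mt ∧ ∀ k ∈ Bᶜ \ C, ∀ j ∈ C, |δ k| ≤ |δ j|

/-- The `n`-fold product of centered Gaussian measures with variance `σ²`:
the law of the i.i.d. noise vector `ε`. -/
def gaussP (n : ℕ) (σ : ℝ) : Measure (Fin n → ℝ) :=
  Measure.pi fun _ => gaussianReal 0 ⟨σ ^ 2, sq_nonneg σ⟩

open Real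

lemma map_pi_gaussianReal_sum_mul {ι : Type*} [Fintype ι] (m : ι → ℝ) (v : ι → ℝ≥0)
    (c : ι → ℝ) :
    (Measure.pi fun i => gaussianReal (m i) (v i)).map (fun ε => ∑ i, c i * ε i)
      = gaussianReal (∑ i, c i * m i) (∑ i, ‖c i‖₊ ^ 2 * v i) := by
  set P := Measure.pi fun i => gaussianReal (m i) (v i)
  have hindep : iIndepFun (fun i (ε : ι → ℝ) => c i * ε i) P :=
    iIndepFun_pi (X := fun i (y : ℝ) => c i * y) fun i => by fun_prop
  have hcoord (i : ι) :
      P.map (fun ε => c i * ε i) = gaussianReal (c i * m i) (‖c i‖₊ ^ 2 * v i) := by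
    calc P.map (fun ε => c i * ε i) = (P.map (Function.eval i)).map (c i * ·) :=
          (Measure.map_map (by fun_prop) (by fun_prop)).symm
      _ = _ := by
          rw [(measurePreserving_eval _ i).map_eq, gaussianReal_map_const_mul]
          congr 2
          exact NNReal.eq (by simp)
  refine Measure.ext_of_charFun (funext fun t => ?_)
  rw [hindep.charFun_map_fun_sum_eq_prod
    fun i => ((measurable_pi_apply i).const_mul _).aemeasurable]
  simp only [Finset.prod_apply, hcoord, charFun_gaussianReal, ← Complex.exp_sum]
  congr 1
  push_cast
  simp only [Finset.sum_sub_distrib, Finset.mul_sum, Finset.sum_mul, Finset.sum_div]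

lemma integral_Ioi_zero_gaussianPDFReal {v : ℝ≥0} (hv : v ≠ 0) :
    ∫ x in Set.Ioi 0, gaussianPDFReal 0 v x = 1 / 2 := by
  have hexp (x : ℝ) : -(x - 0) ^ 2 / (2 * v) = -(2 * v : ℝ)⁻¹ * x ^ 2 := by ring
  simp only [gaussianPDFReal, hexp, integral_const_mul, integral_gaussian_Ioi]
  rw [div_inv_eq_mul, ← mul_assoc, mul_comm π, ← mul_div_assoc, inv_mul_cancel₀ (by positivity)]

lemma gaussianPDFReal_le_exp_mul_gaussianPDFReal {v : ℝ≥0} {a x : ℝ} (ha : 0 ≤ a)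
    (hx : a ≤ x) :
    gaussianPDFReal 0 v x ≤ exp (-(a ^ 2 / (2 * v))) * gaussianPDFReal a v x := by
  simp only [gaussianPDFReal, sub_zero]
  rw [mul_left_comm, ← exp_add]
  gcongr
  rw [neg_div, neg_div, ← neg_add, neg_le_neg_iff, ← add_div]
  gcongr
  nlinarith

lemma gaussianReal_Ici_le {v : ℝ≥0} (hv : v ≠ 0) {a : ℝ} (ha : 0 ≤ a) :
    gaussianReal 0 v (Set.Ici a) ≤ ENNReal.ofReal (exp (-(a ^ 2 / (2 * v))) / 2) := by
  rw [gaussianReal_apply_eq_integral 0 hv, integral_Ici_eq_integral_Ioi]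
  refine ENNReal.ofReal_le_ofReal ?_
  have hshift : ∫ x in Set.Ioi a, gaussianPDFReal a v x
      = ∫ x in Set.Ioi 0, gaussianPDFReal 0 v x := by
    rw [← (measurePreserving_sub_right volume a).setIntegral_preimage_emb
      (measurableEmbedding_subRight a) (gaussianPDFReal 0 v) (Set.Ioi 0)]
    simp [gaussianPDFReal_sub]
  calc ∫ x in Set.Ioi a, gaussianPDFReal 0 v x
      ≤ ∫ x in Set.Ioi a, exp (-(a ^ 2 / (2 * v))) * gaussianPDFReal a v x :=
        setIntegral_mono_on (integrable_gaussianPDFReal 0 v).integrableOn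
          ((integrable_gaussianPDFReal a v).const_mul _).integrableOn measurableSet_Ioi
          fun x hx => gaussianPDFReal_le_exp_mul_gaussianPDFReal ha (le_of_lt hx)
    _ = exp (-(a ^ 2 / (2 * v))) / 2 := by
        rw [integral_const_mul, hshift, integral_Ioi_zero_gaussianPDFReal hv, mul_one_div]

/-- Stated for every `w ≥ v`, so that a zero variance needs no separate treatment. -/
lemma gaussianReal_abs_gt_le {v w : ℝ≥0} (hvw : v ≤ w) {a : ℝ} (ha : 0 ≤ a) :
    gaussianReal 0 v {x | a < |x|} ≤ ENNReal.ofReal (exp (-(a ^ 2 / (2 * w)))) := by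
  rcases eq_or_ne v 0 with rfl | hv
  · have : (0 : ℝ) ∉ {x : ℝ | a < |x|} := by simpa using ha
    simp [gaussianReal_zero_var, this]
  have hsub : {x : ℝ | a < |x|} ⊆ Set.Ici a ∪ (fun x => -x) ⁻¹' Set.Ici a := by
    intro x (hx : a < |x|)
    rcases le_abs'.mp (le_of_lt hx) with h | h
    · exact Or.inr (show a ≤ -x by linarith)
    · exact Or.inl h
  have hneg : gaussianReal 0 v ((fun x => -x) ⁻¹' Set.Ici a) = gaussianReal 0 v (Set.Ici a) := by
    rw [← Measure.map_apply measurable_neg measurableSet_Ici, gaussianReal_map_neg, neg_zero]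
  have hmono : exp (-(a ^ 2 / (2 * v))) ≤ exp (-(a ^ 2 / (2 * w))) := by gcongr
  calc gaussianReal 0 v {x | a < |x|}
      ≤ gaussianReal 0 v (Set.Ici a) + gaussianReal 0 v ((fun x => -x) ⁻¹' Set.Ici a) :=
        (measure_mono hsub).trans (measure_union_le _ _)
    _ ≤ ENNReal.ofReal (exp (-(a ^ 2 / (2 * v))) / 2)
          + ENNReal.ofReal (exp (-(a ^ 2 / (2 * v))) / 2) := by
        rw [hneg]
        gcongr <;> exact gaussianReal_Ici_le hv ha
    _ ≤ ENNReal.ofReal (exp (-(a ^ 2 / (2 * w)))) := by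
        rw [← ENNReal.ofReal_add (by positivity) (by positivity), add_halves]
        exact ENNReal.ofReal_le_ofReal hmono

lemma measure_exists_abs_gt_le {Ω ι : Type*} [MeasurableSpace Ω] [Fintype ι] {μ : Measure Ω}
    {X : ι → Ω → ℝ} (hX : ∀ i, Measurable (X i)) {v : ι → ℝ≥0} {w : ℝ≥0}
    (hlaw : ∀ i, μ.map (X i) = gaussianReal 0 (v i)) (hvw : ∀ i, v i ≤ w) {a : ℝ} (ha : 0 ≤ a) :
    μ {ω | ∃ i, a < |X i ω|} ≤ Fintype.card ι * ENNReal.ofReal (exp (-(a ^ 2 / (2 * w)))) := by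
  have hmeas : MeasurableSet {x : ℝ | a < |x|} := measurableSet_lt measurable_const measurable_abs
  calc μ {ω | ∃ i, a < |X i ω|} = μ (⋃ i, X i ⁻¹' {x | a < |x|}) := by
        congr 1; ext; simp
    _ ≤ ∑ i, μ (X i ⁻¹' {x | a < |x|}) := measure_iUnion_fintype_le _ _
    _ ≤ ∑ _i : ι, ENNReal.ofReal (exp (-(a ^ 2 / (2 * w)))) := by
        gcongr with i
        rw [← Measure.map_apply (hX i) hmeas, hlaw i]
        exact gaussianReal_abs_gt_le (hvw i) ha
    _ = Fintype.card ι * ENNReal.ofReal (exp (-(a ^ 2 / (2 * w)))) := by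
        rw [Finset.sum_const, Finset.card_univ, nsmul_eq_mul]

lemma measure_exists_abs_sum_mul_gt_le {n p : ℕ} (s : ℝ≥0) (x : Matrix (Fin n) (Fin p) ℝ)
    (hx : ∀ j, ∑ i, x i j ^ 2 ≤ n) {a : ℝ} (ha : 0 ≤ a) :
    Measure.pi (fun _ => gaussianReal 0 s) {ε | ∃ j, a < |∑ i, x i j * ε i|}
      ≤ p * ENNReal.ofReal (exp (-(a ^ 2 / (2 * (n * s))))) := by
  have hlaw (j : Fin p) : (Measure.pi fun _ => gaussianReal 0 s).map (fun ε => ∑ i, x i j * ε i)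
      = gaussianReal 0 (∑ i, ‖x i j‖₊ ^ 2 * s) := by
    simpa using map_pi_gaussianReal_sum_mul (fun _ => 0) (fun _ => s) (fun i => x i j)
  have hvar (j : Fin p) : ∑ i, ‖x i j‖₊ ^ 2 * s ≤ n * s := by
    rw [← Finset.sum_mul]
    gcongr
    rw [← NNReal.coe_le_coe]
    simpa using hx j
  simpa using measure_exists_abs_gt_le (fun j => by fun_prop) hlaw hvar ha

lemma ofReal_one_sub_le_measure_compl {Ω : Type*} [MeasurableSpace Ω] {μ : Measure Ω}
    [IsProbabilityMeasure μ] {s : Set Ω} {η : ℝ} (hη : 0 ≤ η) (hs : μ s ≤ ENNReal.ofReal η) :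
    ENNReal.ofReal (1 - η) ≤ μ sᶜ := by
  rw [ENNReal.ofReal_sub _ hη, ENNReal.ofReal_one]
  calc 1 - ENNReal.ofReal η ≤ 1 - μ s := by gcongr
    _ ≤ μ sᶜ := tsub_le_iff_left.mpr (by simpa using measure_univ_le_add_compl (μ := μ) s)

/-- Gaussian concentration lemma. -/
theorem statement15
    (n p : ℕ) (hn : 0 < n) (hp : 0 < p)
    (σ : ℝ) (hσ : 0 < σ)
    (x : Matrix (Fin n) (Fin p) ℝ)
    (hx : ∀ j, (∑ i, x i j ^ 2) / n ≤ 1)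
    (η : ℝ) (hη : η ∈ Set.Ioo (0 : ℝ) 1)
    (τ : ℝ) (hτ : τ ∈ Set.Ioc (0 : ℝ) 1)
    (lamn : ℝ)
    (hlam : lamn = 2 * Real.sqrt 2 / τ * σ * Real.sqrt (Real.log ((p : ℝ) / η) / n)) :
    ENNReal.ofReal (1 - η) ≤
      gaussP n σ {ε | ∀ j, 2 * |(∑ i, x i j * ε i) / n| ≤ τ * lamn} := by
  obtain ⟨hη0, hη1⟩ := hη
  unfold gaussP
  set s : ℝ≥0 := ⟨σ ^ 2, sq_nonneg σ⟩
  set L := log ((p : ℝ) / η)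
  have hL : 0 ≤ L :=
    log_nonneg ((one_le_div hη0).mpr (by linarith [(Nat.one_le_cast (α := ℝ)).mpr hp]))
  set a := n * (√2 * σ * √(L / n))
  have hevent : {ε | ∀ j, 2 * |(∑ i, x i j * ε i) / n| ≤ τ * lamn}
      = {ε : Fin n → ℝ | ∃ j, a < |∑ i, x i j * ε i|}ᶜ := by
    have hthreshold : τ * lamn = 2 * (a / n) := by
      rw [hlam, mul_div_cancel_left₀ _ (by positivity)]
      field_simp [hτ.1.ne']
    ext ε
    simp only [Set.mem_ofPred_eq, Set.mem_compl_iff, not_exists, not_lt, hthreshold, abs_div,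
      Nat.abs_cast]
    refine forall_congr' fun j => ?_
    rw [mul_le_mul_iff_right₀ two_pos, div_le_div_iff_of_pos_right (by positivity)]
  have hexponent : a ^ 2 / (2 * (n * s)) = L := by
    rw [show (s : ℝ) = σ ^ 2 from rfl, mul_pow, mul_pow, mul_pow, sq_sqrt zero_le_two,
      sq_sqrt (div_nonneg hL n.cast_nonneg)]
    field_simp
  have htail := measure_exists_abs_sum_mul_gt_le s x
    (fun j => (div_le_one (by positivity)).mp (hx j)) (a := a) (by positivity)
  rw [hexponent, Real.exp_neg, exp_log (by positivity), inv_div,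
    ← ENNReal.ofReal_natCast, ← ENNReal.ofReal_mul (by positivity),
    mul_div_cancel₀ _ (by positivity)] at htail
  rw [hevent]
  exact ofReal_one_sub_le_measure_compl hη0.le htail
end
end

section
/- Let X be an n×p real matrix with columns X_j, β* ∈ ℝ^p, ε ∈ ℝ^n, and Y = Xβ* + ε. Let J be an m×p real matrix, J̃ = J'J, λ > 0, μ > 0, and let β̂ be any minimizer over β ∈ ℝ^p of ‖Y − Xβ‖_n² + λ|β|_1 + μ·β'J̃β. Set X̃ = [X ; √(nμ)·J], V_j = n^{-1}·Σ_{i=1}^n x_{i,j}·ε_i, and let B ⊆ {1,…,p} be any set with B ⊇ A* ∪ {j : (J̃β*)_j ≠ 0}, where A* = {j : β*_j ≠ 0}. If max_{j=1,…,p} 2|V_j| ≤ λ/2, then (1/n)·|X̃β* − X̃β̂|_2² + (λ/2)·|β* − β̂|_1 ≤ (2λ·√|A*| + 2μ·|J̃β*|_2)·|β*_B − β̂_B|_2. -/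
open MeasureTheory ProbabilityTheory Matrix Finset
open scoped Classical BigOperators ENNReal NNReal

noncomputable section

/-!
Comparing the criterion at `b` with its value at `βs` gives, for `δ = βs - b`, the basic
inequality `|Xδ|²/n + μ|Jδ|² ≤ λ(|βs|₁ - |b|₁) - 2ε'Xδ/n + 2μ(J'Jβs)'δ`, and the left-hand
side is `|X̃δ|²/n`. On the event `max_j 2|V_j| ≤ λ/2` the noise term is at most `(λ/2)|δ|₁`.
Coordinatewise, `|βs_j| - |b_j| + |δ_j|` is `0` off the support `A*` of `βs` and at most
`2|δ_j|` on it, so Cauchy–Schwarz bounds the `ℓ₁` terms by `2λ√|A*|·|δ_B|₂`; since `J'Jβs`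
vanishes off `B`, Cauchy–Schwarz also gives `(J'Jβs)'δ ≤ |J'Jβs|₂·|δ_B|₂`.
-/
lemma dotProduct_transpose_mul_self_mulVec {R m p : Type*} [CommSemiring R] [Fintype m]
    [Fintype p] (J : Matrix m p R) (v w : p → R) : v ⬝ᵥ (Jᵀ * J) *ᵥ w = J *ᵥ v ⬝ᵥ J *ᵥ w := by
  rw [← mulVec_mulVec, dotProduct_mulVec, vecMul_transpose]

lemma sum_sq_eq_dotProduct_self {R ι : Type*} [Semiring R] [Fintype ι] (v : ι → R) :
    ∑ i, v i ^ 2 = v ⬝ᵥ v := by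
  simp only [dotProduct, sq]

lemma crit_sub_eq_crit_add {n m p : ℕ} (X : Matrix (Fin n) (Fin p) ℝ) (βs : Fin p → ℝ)
    (εv : Fin n → ℝ) (J : Matrix (Fin m) (Fin p) ℝ) (lam mu : ℝ) (δ : Fin p → ℝ) :
    crit X (X *ᵥ βs + εv) J lam mu (βs - δ) =
      crit X (X *ᵥ βs + εv) J lam mu βs + (X *ᵥ δ ⬝ᵥ X *ᵥ δ + 2 * (εv ⬝ᵥ X *ᵥ δ)) / n
        + lam * (l1norm (βs - δ) - l1norm βs)
        + mu * (J *ᵥ δ ⬝ᵥ J *ᵥ δ - 2 * ((Jᵀ * J) *ᵥ βs ⬝ᵥ δ)) := by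
  rw [dotProduct_comm _ δ]
  simp only [crit, normnSq, sum_sq_eq_dotProduct_self, add_sub_cancel_left,
    dotProduct_transpose_mul_self_mulVec, mulVec_sub, dotProduct_add, add_dotProduct,
    dotProduct_sub, sub_dotProduct]
  rw [dotProduct_comm (X *ᵥ δ) εv, dotProduct_comm (J *ᵥ δ) (J *ᵥ βs)]
  ring

lemma basic_inequality {n m p : ℕ} (X : Matrix (Fin n) (Fin p) ℝ) (βs : Fin p → ℝ)
    (εv : Fin n → ℝ) (J : Matrix (Fin m) (Fin p) ℝ) (lam mu : ℝ) (b : Fin p → ℝ)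
    (hb : crit X (X *ᵥ βs + εv) J lam mu b ≤ crit X (X *ᵥ βs + εv) J lam mu βs) :
    (X *ᵥ (βs - b) ⬝ᵥ X *ᵥ (βs - b) + 2 * (εv ⬝ᵥ X *ᵥ (βs - b))) / n
      + lam * (l1norm b - l1norm βs)
      + mu * (J *ᵥ (βs - b) ⬝ᵥ J *ᵥ (βs - b) - 2 * ((Jᵀ * J) *ᵥ βs ⬝ᵥ (βs - b))) ≤ 0 := by
  rw [← sub_sub_cancel βs b, crit_sub_eq_crit_add, sub_sub_cancel] at hb
  linarith

lemma abs_dotProduct_le_mul_l1norm {p : ℕ} {c : ℝ} (u δ : Fin p → ℝ) (hu : ∀ j, |u j| ≤ c) :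
    |u ⬝ᵥ δ| ≤ c * l1norm δ := by
  rw [l1norm, mul_sum]
  refine (abs_sum_le_sum_abs _ _).trans (sum_le_sum fun j _ => ?_)
  rw [abs_mul]
  exact mul_le_mul_of_nonneg_right (hu j) (abs_nonneg _)

lemma two_dotProduct_mulVec_div_eq {n p : ℕ} (X : Matrix (Fin n) (Fin p) ℝ) (εv : Fin n → ℝ)
    (δ : Fin p → ℝ) :
    2 * (εv ⬝ᵥ X *ᵥ δ) / n = (fun j => 2 * ((∑ i, X i j * εv i) / n)) ⬝ᵥ δ := by
  rw [dotProduct_mulVec]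
  simp only [dotProduct, vecMul, mul_sum, sum_mul, sum_div]
  exact sum_congr rfl fun j _ => sum_congr rfl fun i _ => by ring

lemma l1norm_sub_l1norm_add_l1norm_sub_le {p : ℕ} (β b : Fin p → ℝ) :
    l1norm β - l1norm b + l1norm (β - b) ≤ 2 * ∑ j ∈ spSupp β, |β j - b j| := by
  rw [spSupp, sum_filter, mul_sum]
  simp only [l1norm, ← sum_sub_distrib, ← sum_add_distrib, Pi.sub_apply]
  refine sum_le_sum fun j _ => ?_
  split_ifs with hj
  · linarith [abs_sub_abs_le_abs_sub (β j) (b j)]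
  · simp [not_not.mp hj]

lemma sum_abs_le_sqrt_card_mul_sqrt_sum_sq {ι : Type*} (s : Finset ι) (f : ι → ℝ) :
    ∑ i ∈ s, |f i| ≤ √(#s : ℝ) * √(∑ i ∈ s, f i ^ 2) := by
  simpa using Real.sum_mul_le_sqrt_mul_sqrt s (fun _ => 1) (fun i => |f i|)

lemma dotProduct_le_l2norm_mul_sqrt_sum_sq {p : ℕ} (u v : Fin p → ℝ) (B : Finset (Fin p))
    (hu : ∀ j ∉ B, u j = 0) : u ⬝ᵥ v ≤ l2norm u * √(∑ j ∈ B, v j ^ 2) := by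
  have hsupp : u ⬝ᵥ v = ∑ j ∈ B, u j * v j :=
    (sum_subset (subset_univ B) fun j _ hj => by rw [hu j hj, zero_mul]).symm
  rw [hsupp, l2norm]
  refine (Real.sum_mul_le_sqrt_mul_sqrt B u v).trans ?_
  gcongr
  exact subset_univ B

lemma l2norm_restr_sub_restr {p : ℕ} (B : Finset (Fin p)) (β b : Fin p → ℝ) :
    l2norm (restr B β - restr B b) = √(∑ j ∈ B, (β j - b j) ^ 2) := by
  have hsq : ∀ j, (restr B β - restr B b) j ^ 2 = if j ∈ B then (β j - b j) ^ 2 else 0 := by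
    intro j
    by_cases hj : j ∈ B <;> simp [restr, hj]
  rw [l2norm, sum_congr rfl fun j _ => hsq j, sum_ite_mem, univ_inter]

lemma sum_sq_fromRows_smul_mulVec {n m p : ℕ} (X : Matrix (Fin n) (Fin p) ℝ)
    (J : Matrix (Fin m) (Fin p) ℝ) (c : ℝ) (δ : Fin p → ℝ) :
    ∑ i, (fromRows X (c • J) *ᵥ δ) i ^ 2 = X *ᵥ δ ⬝ᵥ X *ᵥ δ + c ^ 2 * (J *ᵥ δ ⬝ᵥ J *ᵥ δ) := by
  rw [sum_sq_eq_dotProduct_self, fromRows_mulVec, sumElim_dotProduct_sumElim, smul_mulVec,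
    smul_dotProduct, dotProduct_smul, smul_eq_mul, smul_eq_mul, ← mul_assoc, ← sq]

/-- deterministic basic inequality on the event
`max_j 2|V_j| ≤ λ/2`. -/
theorem statement17
    (n p m : ℕ) (hn : 0 < n)
    (X : Matrix (Fin n) (Fin p) ℝ) (βs : Fin p → ℝ) (εv : Fin n → ℝ)
    (J : Matrix (Fin m) (Fin p) ℝ)
    (Jt : Matrix (Fin p) (Fin p) ℝ) (hJt : Jt = Jᵀ * J)
    (lam mu : ℝ) (hlam : 0 < lam) (hmu : 0 < mu)
    (b : Fin p → ℝ)
    (hb : ∀ β, crit X (X.mulVec βs + εv) J lam mu b ≤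
               crit X (X.mulVec βs + εv) J lam mu β)
    (Xt : Matrix (Fin n ⊕ Fin m) (Fin p) ℝ)
    (hXt : Xt = Matrix.fromRows X (Real.sqrt (n * mu) • J))
    (B : Finset (Fin p))
    (hBsupp : spSupp βs ∪ (Finset.univ.filter fun j => Jt.mulVec βs j ≠ 0) ⊆ B)
    (hV : ∀ j, 2 * |(∑ i, X i j * εv i) / n| ≤ lam / 2) :
    (∑ i, ((Xt.mulVec βs - Xt.mulVec b) i) ^ 2) / n + lam / 2 * l1norm (βs - b) ≤
      (2 * lam * Real.sqrt ((spSupp βs).card : ℝ) + 2 * mu * l2norm (Jt.mulVec βs)) *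
        l2norm (restr B βs - restr B b) := by
  subst hJt hXt
  have hbasic := basic_inequality X βs εv J lam mu b (hb βs)
  have hcross : -(2 * (εv ⬝ᵥ X *ᵥ (βs - b)) / n) ≤ lam / 2 * l1norm (βs - b) := by
    rw [two_dotProduct_mulVec_div_eq]
    refine (neg_le_abs _).trans (abs_dotProduct_le_mul_l1norm _ _ fun j => ?_)
    simpa only [abs_mul, abs_two] using hV j
  have hl1 := l1norm_sub_l1norm_add_l1norm_sub_le βs b
  have hsupp : ∑ j ∈ spSupp βs, |βs j - b j|
      ≤ √(#(spSupp βs) : ℝ) * √(∑ j ∈ B, (βs j - b j) ^ 2) := by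
    refine (sum_abs_le_sqrt_card_mul_sqrt_sum_sq _ _).trans ?_
    gcongr
    exact subset_union_left.trans hBsupp
  have hpen : (Jᵀ * J) *ᵥ βs ⬝ᵥ (βs - b)
      ≤ l2norm ((Jᵀ * J) *ᵥ βs) * √(∑ j ∈ B, (βs j - b j) ^ 2) :=
    dotProduct_le_l2norm_mul_sqrt_sum_sq _ _ B fun j hj => by
      by_contra h
      exact hj (hBsupp (mem_union_right _ (mem_filter.mpr ⟨mem_univ j, h⟩)))
  have hn' : (n : ℝ) ≠ 0 := Nat.cast_ne_zero.mpr hn.ne'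
  rw [← mulVec_sub, sum_sq_fromRows_smul_mulVec, Real.sq_sqrt (by positivity),
    l2norm_restr_sub_restr, add_div, mul_assoc, mul_div_cancel_left₀ _ hn']
  linear_combination hbasic + hcross + lam * hl1 + 2 * lam * hsupp + 2 * mu * hpen
end
end

section
/- Let X be an n×p real matrix with columns X_j, β* ∈ ℝ^p, ε ∈ ℝ^n, and Y = Xβ* + ε. Let J be an m×p real matrix, J̃ = J'J, λ > 0, μ > 0, Ψ^n = n^{-1}X'X, K_n = Ψ^n + μ·J̃, and let β̂ be any minimizer over β ∈ ℝ^p of ‖Y − Xβ‖_n² + λ|β|_1 + μ·β'J̃β. Then the Karush–Kuhn–Tucker conditions give |K_n(β̂ − β*) − n^{-1}X'ε + μ·J̃β*|_∞ ≤ λ/2, i.e., for every j ∈ {1,…,p}, |(K_n(β̂ − β*))_j − n^{-1}·X_j'ε + μ·(J̃β*)_j| ≤ λ/2. -/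
/-!
Perturbing the minimizer `b` along a direction `d` changes the smooth part of the criterion by
`2t⟨G, d⟩ + O(t²)`, where `G = n⁻¹X'(Xb − Y) + μJ̃b` is half its gradient, and the `ℓ₁` part by
at most `λ|t||d|₁`. Minimality forces `2|⟨G, d⟩| ≤ λ|d|₁`; for `d = eⱼ` this is `|Gⱼ| ≤ λ/2`, and
substituting `Y = Xβ* + ε` rewrites `G` as `K_n(b − β*) − n⁻¹X'ε + μJ̃β*`.
-/

open MeasureTheory ProbabilityTheory Matrix Finset
open scoped Classical BigOperators ENNReal NNReal

noncomputable section

open Filter Topology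

lemma le_of_forall_pos_le_add_mul {x c Q : ℝ} (h : ∀ s > 0, x ≤ c + Q * s) : x ≤ c := by
  have hlim : Tendsto (fun s => c + Q * s) (𝓝[>] 0) (𝓝 c) := by
    have : Continuous fun s : ℝ => c + Q * s := by fun_prop
    simpa using (this.tendsto 0).mono_left nhdsWithin_le_nhds
  exact ge_of_tendsto hlim (eventually_nhdsWithin_of_forall h)

lemma abs_le_of_forall_nonneg_mul_add_sq_add_abs {a Q c : ℝ}
    (h : ∀ t, 0 ≤ a * t + Q * t ^ 2 + c * |t|) : |a| ≤ c := by
  have bound : ∀ a', (∀ s > 0, 0 ≤ a' * s + Q * s ^ 2 + c * s) → -a' ≤ c := fun a' h' =>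
    le_of_forall_pos_le_add_mul (Q := Q) fun s hs => by
      have : 0 ≤ s * (a' + Q * s + c) := by linarith [h' s hs]
      linarith [nonneg_of_mul_nonneg_right this hs]
  refine abs_le.mpr ⟨?_, ?_⟩
  · linarith [bound a fun s hs => by simpa [abs_of_pos hs] using h s]
  · simpa using bound (-a) fun s hs => by simpa [abs_of_pos hs] using h (-s)

namespace Matrix

variable {ι : Type*} [Fintype ι]

lemma dotProduct_mulVec_add_smul {M : Matrix ι ι ℝ} (hM : Mᵀ = M) (b d : ι → ℝ) (t : ℝ) :
    (b + t • d) ⬝ᵥ M *ᵥ (b + t • d) =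
      b ⬝ᵥ M *ᵥ b + 2 * t * (M *ᵥ b ⬝ᵥ d) + t ^ 2 * (d ⬝ᵥ M *ᵥ d) := by
  have hsymm : b ⬝ᵥ M *ᵥ d = M *ᵥ b ⬝ᵥ d := by
    rw [dotProduct_mulVec, ← mulVec_transpose, hM]
  have hsymm' : d ⬝ᵥ M *ᵥ b = M *ᵥ b ⬝ᵥ d := dotProduct_comm _ _
  simp only [mulVec_add, mulVec_smul, dotProduct_add, add_dotProduct, dotProduct_smul,
    smul_dotProduct, smul_eq_mul, hsymm, hsymm']
  ring

end Matrix

lemma normnSq_sub_smul {n : ℕ} (r v : Fin n → ℝ) (t : ℝ) :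
    normnSq (r - t • v) = normnSq r - 2 * t * (r ⬝ᵥ v) / n + t ^ 2 * normnSq v := by
  have hexp : ∀ i, (r - t • v) i ^ 2 = r i ^ 2 - 2 * t * (r i * v i) + t ^ 2 * v i ^ 2 := by
    intro i; simp only [Pi.sub_apply, Pi.smul_apply, smul_eq_mul]; ring
  simp only [normnSq, dotProduct, hexp, Finset.sum_add_distrib, Finset.sum_sub_distrib,
    ← Finset.mul_sum]
  ring

lemma l1norm_add_smul_le {p : ℕ} (b d : Fin p → ℝ) (t : ℝ) :
    l1norm (b + t • d) ≤ l1norm b + |t| * l1norm d := by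
  simp only [l1norm, Finset.mul_sum, ← Finset.sum_add_distrib]
  refine Finset.sum_le_sum fun j _ => ?_
  simpa [abs_mul] using abs_add_le (b j) (t * d j)

lemma l1norm_single_one {p : ℕ} (j : Fin p) : l1norm (Pi.single j (1 : ℝ)) = 1 := by
  simp [l1norm, Pi.single_apply, apply_ite]

section KKT

variable {n m p : ℕ} (X : Matrix (Fin n) (Fin p) ℝ) (Y : Fin n → ℝ)
  (J : Matrix (Fin m) (Fin p) ℝ) (mu : ℝ)

def critHalfGrad (b : Fin p → ℝ) : Fin p → ℝ :=
  (n : ℝ)⁻¹ • Xᵀ *ᵥ (X *ᵥ b - Y) + mu • (Jᵀ * J) *ᵥ b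

lemma crit_add_smul_le {lam : ℝ} (hlam : 0 ≤ lam) (b d : Fin p → ℝ) (t : ℝ) :
    crit X Y J lam mu (b + t • d) ≤ crit X Y J lam mu b
      + 2 * t * (critHalfGrad X Y J mu b ⬝ᵥ d)
      + t ^ 2 * (normnSq (X *ᵥ d) + mu * (d ⬝ᵥ (Jᵀ * J) *ᵥ d))
      + lam * (|t| * l1norm d) := by
  have hsmooth : normnSq (Y - X *ᵥ (b + t • d)) =
      normnSq (Y - X *ᵥ b) - 2 * t * ((Y - X *ᵥ b) ⬝ᵥ X *ᵥ d) / n + t ^ 2 * normnSq (X *ᵥ d) := by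
    rw [← normnSq_sub_smul, mulVec_add, mulVec_smul, sub_sub]
  have hquad := dotProduct_mulVec_add_smul (M := Jᵀ * J) (by simp) b d t
  have hgrad : critHalfGrad X Y J mu b ⬝ᵥ d =
      -((Y - X *ᵥ b) ⬝ᵥ X *ᵥ d) / n + mu * ((Jᵀ * J) *ᵥ b ⬝ᵥ d) := by
    rw [critHalfGrad, add_dotProduct, smul_dotProduct, smul_dotProduct, mulVec_transpose,
      ← dotProduct_mulVec, ← neg_sub, neg_dotProduct, smul_eq_mul, smul_eq_mul]
    ring
  have hl1 := mul_le_mul_of_nonneg_left (l1norm_add_smul_le b d t) hlam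
  rw [crit, crit, hsmooth, hquad, hgrad]
  linear_combination hl1

lemma two_mul_abs_critHalfGrad_dotProduct_le {lam : ℝ} (hlam : 0 ≤ lam) {b : Fin p → ℝ}
    (hb : ∀ β, crit X Y J lam mu b ≤ crit X Y J lam mu β) (d : Fin p → ℝ) :
    2 * |critHalfGrad X Y J mu b ⬝ᵥ d| ≤ lam * l1norm d := by
  have h := abs_le_of_forall_nonneg_mul_add_sq_add_abs (a := 2 * (critHalfGrad X Y J mu b ⬝ᵥ d))
    (Q := normnSq (X *ᵥ d) + mu * (d ⬝ᵥ (Jᵀ * J) *ᵥ d)) (c := lam * l1norm d) fun t => by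
      linarith [(hb (b + t • d)).trans (crit_add_smul_le X Y J mu hlam b d t), abs_nonneg t]
  rwa [abs_mul, abs_two] at h

lemma critHalfGrad_linear_model (βs b : Fin p → ℝ) (ε : Fin n → ℝ) :
    critHalfGrad X (X *ᵥ βs + ε) J mu b =
      ((n : ℝ)⁻¹ • (Xᵀ * X) + mu • (Jᵀ * J)) *ᵥ (b - βs) - (n : ℝ)⁻¹ • Xᵀ *ᵥ ε
        + mu • (Jᵀ * J) *ᵥ βs := by
  simp only [critHalfGrad, add_mulVec, smul_mulVec, ← mulVec_mulVec, mulVec_sub]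
  rw [mulVec_add]
  module

end KKT

theorem statement19_general
    (n p m : ℕ)
    (X : Matrix (Fin n) (Fin p) ℝ) (βs : Fin p → ℝ) (εv : Fin n → ℝ)
    (J : Matrix (Fin m) (Fin p) ℝ)
    (Jt : Matrix (Fin p) (Fin p) ℝ) (hJt : Jt = Jᵀ * J)
    (lam mu : ℝ) (hlam : 0 < lam)
    (Kn : Matrix (Fin p) (Fin p) ℝ) (hKn : Kn = (n : ℝ)⁻¹ • (Xᵀ * X) + mu • Jt)
    (b : Fin p → ℝ)
    (hb : ∀ β, crit X (X.mulVec βs + εv) J lam mu b ≤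
               crit X (X.mulVec βs + εv) J lam mu β) :
    ∀ j, |Kn.mulVec (b - βs) j - (∑ i, X i j * εv i) / n + mu * Jt.mulVec βs j| ≤
      lam / 2 := by
  intro j
  subst hJt hKn
  have hkkt := two_mul_abs_critHalfGrad_dotProduct_le X _ J mu hlam.le hb (Pi.single j 1)
  have hnoise : (∑ i, X i j * εv i) / n = ((n : ℝ)⁻¹ • Xᵀ *ᵥ εv) j := by
    simp [mulVec, dotProduct, div_eq_inv_mul]
  rw [dotProduct_single_one, l1norm_single_one, critHalfGrad_linear_model] at hkkt
  rw [hnoise]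
  simpa [le_div_iff₀, mul_comm] using hkkt

/-- the Karush–Kuhn–Tucker conditions for the quadratic-penalized
Lasso criterion. -/
theorem statement19
    (n p m : ℕ) (hn : 0 < n)
    (X : Matrix (Fin n) (Fin p) ℝ) (βs : Fin p → ℝ) (εv : Fin n → ℝ)
    (J : Matrix (Fin m) (Fin p) ℝ)
    (Jt : Matrix (Fin p) (Fin p) ℝ) (hJt : Jt = Jᵀ * J)
    (lam mu : ℝ) (hlam : 0 < lam) (hmu : 0 < mu)
    (Kn : Matrix (Fin p) (Fin p) ℝ) (hKn : Kn = (n : ℝ)⁻¹ • (Xᵀ * X) + mu • Jt)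
    (b : Fin p → ℝ)
    (hb : ∀ β, crit X (X.mulVec βs + εv) J lam mu b ≤
               crit X (X.mulVec βs + εv) J lam mu β) :
    ∀ j, |Kn.mulVec (b - βs) j - (∑ i, X i j * εv i) / n + mu * Jt.mulVec βs j| ≤
      lam / 2 :=
  statement19_general n p m X βs εv J Jt hJt lam mu hlam Kn hKn b hb
end
end
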